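/- Let a, b, c, d be positive integers with a + b = c + d = n. The meander graph M(a, b | c, d) consists of a single path if and only if gcd(a − c, n) = 1. -/

import Mathlib

/-!
Number the positions `1, …, n` by their residues in `ZMod n`. For a two-block composition the
arcs of `[a, b]` join exactly the pairs `x ≠ y` with `x + y = a + 1`, those of `[c, d]` the pairs
with `x + y = c + 1`, so `M(a, b | c, d)` is the graph of the two reflections `x ↦ A - x` and
`x ↦ C - x` of `ZMod n`, where `A = a + 1` and `C = c + 1`.

If `D = A - C` is a unit, one of `A`, `C` is a double, say `A = s + s`, and the affine change of
variables `x = s + y D` turns the two reflections into `y ↦ -y` and `y ↦ -1 - y`, whose graph is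
the path `0, -1, 1, -2, 2, …`. If instead a prime `p` divides both `n` and `D`, then along every
walk the residue of `x` mod `p` is either kept or sent to `A - x`; connectedness forces `p = 2` and
`A` odd. Then neither reflection has a fixed point, so every vertex `x` has the neighbours `A - x`
and `C - x`; at an endpoint of the path they coincide, so `A = C` and the graph is a perfect
matching, which is a path only for `n = 2` and `A = 1`, that is `a ≡ 0 (mod n)`.
-/

/-- Two (1-based) positions `u v` are joined by an arc determined by the
composition `L`: they lie in a common block of `L` and are reflections of each
other across the middle of that block. -/
def blockAdj (L : List ℕ) (u v : ℕ) : Prop :=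
  ∃ k < L.length,
    (L.take k).sum < u ∧ u ≤ (L.take (k + 1)).sum ∧
    (L.take k).sum < v ∧ v ≤ (L.take (k + 1)).sum ∧
    u + v = (L.take k).sum + (L.take (k + 1)).sum + 1 ∧ u ≠ v

/-- The meander graph `M(x | y)` on vertices `{1, …, n}` (represented by
`Fin n`, vertex `i` corresponding to the number `i + 1`): top edges come from
the blocks of `x`, bottom edges from the blocks of `y`. -/
def meander (x y : List ℕ) (n : ℕ) : SimpleGraph (Fin n) where
  Adj i j := blockAdj x ((i : ℕ) + 1) ((j : ℕ) + 1) ∨ blockAdj y ((i : ℕ) + 1) ((j : ℕ) + 1)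
  symm := by
    constructor
    rintro i j (⟨k, hk, h1, h2, h3, h4, h5, h6⟩ | ⟨k, hk, h1, h2, h3, h4, h5, h6⟩)
    · exact Or.inl ⟨k, hk, h3, h4, h1, h2, by omega, by omega⟩
    · exact Or.inr ⟨k, hk, h3, h4, h1, h2, by omega, by omega⟩
  loopless := by
    constructor
    rintro i (⟨k, hk, h1, h2, h3, h4, h5, h6⟩ | ⟨k, hk, h1, h2, h3, h4, h5, h6⟩) <;> omega

/-- A graph on `Fin n` consists of a single path when it is isomorphic to the
path graph on `n` vertices. -/
def IsSinglePath {n : ℕ} (G : SimpleGraph (Fin n)) : Prop :=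
  Nonempty (G ≃g SimpleGraph.pathGraph n)

open SimpleGraph Function

namespace ZMod

theorem natCast_eq_natCast_iff_of_lt {n x y : ℕ} (h₁ : y < x + n) (h₂ : x < y + 2 * n) :
    (x : ZMod n) = y ↔ x = y ∨ x = y + n := by
  constructor
  · intro h
    rw [← Int.cast_natCast x, ← Int.cast_natCast y, intCast_eq_intCast_iff_dvd_sub] at h
    obtain ⟨q, hq⟩ := h
    have hq₁ : -2 < q := by nlinarith
    have hq₂ : q < 1 := by nlinarith
    interval_cases q <;> omega
  · rintro (rfl | rfl) <;> simp

theorem natCast_eq_neg_one_iff_of_lt {n x : ℕ} (h : x + 1 < 2 * n) :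
    (x : ZMod n) = -1 ↔ x + 1 = n := by
  rw [eq_neg_iff_add_eq_zero, ← Nat.cast_one, ← Nat.cast_add, ← Nat.cast_zero,
    natCast_eq_natCast_iff_of_lt (by omega) (by omega)]
  omega

theorem bijective_of_injective_fin {n : ℕ} [NeZero n] {f : Fin n → ZMod n}
    (hf : Injective f) : Bijective f :=
  (Fintype.bijective_iff_injective_and_card f).mpr ⟨hf, by simp⟩

theorem exists_add_self_eq_or_of_isUnit_sub {n : ℕ} [NeZero n] {A C : ZMod n}
    (h : IsUnit (A - C)) : ∃ s, s + s = A ∨ s + s = C := by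
  rcases Nat.even_or_odd n with hn | hn
  · have hval : Even A.val ∨ Even C.val := by
      by_contra! hodd
      simp only [Nat.not_even_iff_odd] at hodd
      have := h.map (castHom (even_iff_two_dvd.mp hn) (ZMod 2))
      rw [map_sub, ← natCast_zmod_val A, ← natCast_zmod_val C, map_natCast, map_natCast,
        natCast_eq_one_iff_odd.mpr hodd.1, natCast_eq_one_iff_odd.mpr hodd.2, sub_self] at this
      exact not_isUnit_zero this
    rcases hval with ⟨m, hm⟩ | ⟨m, hm⟩
    · exact ⟨m, .inl (by rw [← natCast_zmod_val A, hm, Nat.cast_add])⟩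
    · exact ⟨m, .inr (by rw [← natCast_zmod_val C, hm, Nat.cast_add])⟩
  · have h2 : IsUnit (2 : ZMod n) := by
      rw [← Nat.cast_ofNat, isUnit_iff_coprime]
      exact Nat.coprime_two_left.mpr hn
    exact ⟨A * h2.unit⁻¹, .inl (by rw [← two_mul, mul_left_comm, h2.mul_val_inv, mul_one])⟩

theorem exists_prime_castHom_eq_zero_of_not_isUnit {n : ℕ} [NeZero n] {x : ZMod n}
    (hx : ¬IsUnit x) : ∃ p, p.Prime ∧ ∃ h : p ∣ n, castHom h (ZMod p) x = 0 := by
  rw [← natCast_zmod_val x, isUnit_iff_coprime] at hx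
  obtain ⟨p, hp, hpx, hpn⟩ := Nat.Prime.not_coprime_iff_dvd.mp hx
  refine ⟨p, hp, hpn, ?_⟩
  rw [← natCast_zmod_val x, map_natCast, natCast_eq_zero_iff]
  exact hpx

end ZMod

theorem eq_one_and_two_eq_zero_of_forall_eq_or_add_eq {R : Type*} [Ring R] [Nontrivial R] {B : R}
    (h : ∀ z w : R, z = w ∨ z + w = B) : B = 1 ∧ (2 : R) = 0 := by
  have hB : B = 1 := (by simpa using h 0 1 : 1 = B).symm
  refine ⟨hB, ?_⟩
  rcases h 0 (-1) with h' | h'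
  · simp at h'
  · rw [hB, zero_add, neg_eq_iff_add_eq_zero] at h'
    rw [← h', one_add_one_eq_two]

def reflectionGraph {α : Type*} [AddCommGroup α] (A C : α) : SimpleGraph α where
  Adj x y := x ≠ y ∧ (x + y = A ∨ x + y = C)
  symm := ⟨fun _ _ h => ⟨h.1.symm, by rw [add_comm]; exact h.2⟩⟩
  loopless := ⟨fun _ h => h.1 rfl⟩

namespace reflectionGraph

section AddCommGroup

variable {α : Type*} [AddCommGroup α] {A C : α}

theorem adj_iff {x y : α} :
    (reflectionGraph A C).Adj x y ↔ x ≠ y ∧ (x + y = A ∨ x + y = C) := Iff.rfl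

theorem comm : reflectionGraph A C = reflectionGraph C A := by
  ext x y
  simp only [adj_iff, or_comm]

theorem eq_sub_of_adj {x y : α} (h : (reflectionGraph A C).Adj x y) : y = A - x ∨ y = C - x := by
  rcases (adj_iff.mp h).2 with h | h
  · exact .inl (eq_sub_of_add_eq' h)
  · exact .inr (eq_sub_of_add_eq' h)

theorem adj_sub_left {x : α} (hA : x + x ≠ A) : (reflectionGraph A C).Adj x (A - x) :=
  adj_iff.mpr ⟨fun h => hA (eq_sub_iff_add_eq.mp h), .inl (add_sub_cancel x A)⟩

theorem adj_sub_right {x : α} (hC : x + x ≠ C) : (reflectionGraph A C).Adj x (C - x) := by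
  rw [comm]
  exact adj_sub_left hC

theorem map_eq_or_add_eq_of_reachable {β : Type*} [AddCommGroup β] (φ : α →+ β) (hφ : φ A = φ C)
    {x y : α} (h : (reflectionGraph A C).Reachable x y) : φ y = φ x ∨ φ x + φ y = φ A := by
  obtain ⟨p⟩ := h
  induction p with
  | nil => exact .inl rfl
  | @cons u v w hadj p ih =>
    have hstep : φ u + φ v = φ A := by
      rcases (adj_iff.mp hadj).2 with h | h
      · rw [← map_add, h]
      · rw [← map_add, h, hφ]
    rcases ih with h | h
    · exact .inr (h ▸ hstep)
    · exact .inl (add_left_cancel (h.trans (hstep.symm.trans (add_comm _ _))))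

theorem eq_of_iso_pathGraph {n : ℕ} (e : reflectionGraph A C ≃g pathGraph n)
    (hA : ∀ x, x + x ≠ A) (hC : ∀ x, x + x ≠ C) : A = C := by
  have hn := (e 0).pos
  set x := e.symm ⟨0, hn⟩
  have hnbr : ∀ y, (reflectionGraph A C).Adj x y → (e y : ℕ) = 1 := fun y h => by
    have := pathGraph_adj.mp (e.map_rel_iff.mpr h)
    simp only [x, RelIso.apply_symm_apply] at this
    omega
  have h := e.injective (Fin.ext ((hnbr _ (adj_sub_left (hA x))).trans
    (hnbr _ (adj_sub_right (hC x))).symm))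
  simpa using h

theorem le_two_of_iso_pathGraph {n : ℕ} (e : reflectionGraph A A ≃g pathGraph n) : n ≤ 2 := by
  by_contra! hn
  have hnbr : ∀ i, (pathGraph n).Adj ⟨1, by omega⟩ i → e.symm i = A - e.symm ⟨1, by omega⟩ :=
    fun i hi => by simpa using eq_sub_of_adj (e.symm.map_rel_iff.mpr hi)
  have h := e.symm.injective ((hnbr ⟨0, by omega⟩ (pathGraph_adj.mpr (by simp))).trans
    (hnbr ⟨2, by omega⟩ (pathGraph_adj.mpr (by simp))).symm)
  simp at h

end AddCommGroup

section CommRing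

variable {R : Type*} [CommRing R] {A C : R}

noncomputable def affineIso {s : R} (hs : s + s = A) (hu : IsUnit (A - C)) :
    reflectionGraph (0 : R) (-1) ≃g reflectionGraph A C where
  toEquiv := (Units.mulRight hu.unit).trans (Equiv.addLeft s)
  map_rel_iff' {y z} := by
    show (reflectionGraph A C).Adj (s + y * (A - C)) (s + z * (A - C)) ↔ _
    have hsum : s + y * (A - C) + (s + z * (A - C)) = A + (y + z) * (A - C) := by
      rw [← hs]; ring
    have hC : C - A = -1 * (A - C) := by ring
    rw [adj_iff, adj_iff, hsum, ne_eq, ne_eq, add_right_inj, hu.mul_left_inj, add_eq_left,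
      hu.mul_left_eq_zero, ← eq_sub_iff_add_eq' (a := (y + z) * (A - C)), hC, hu.mul_left_inj]

end CommRing

/-- The walk `0, -1, 1, -2, 2, …` through `ZMod n`, with `-m` represented by `n - m`. -/
def zigzag (n k : ℕ) : ℕ := if k % 2 = 0 then k / 2 else n - (k + 1) / 2

theorem zigzag_lt {n k : ℕ} (hk : k < n) : zigzag n k < n := by
  unfold zigzag; split_ifs <;> omega

noncomputable def pathGraphIso (n : ℕ) [NeZero n] :
    pathGraph n ≃g reflectionGraph (0 : ZMod n) (-1) :=
  have hcast : ∀ k l : Fin n, ((zigzag n k : ℕ) : ZMod n) = (zigzag n l : ℕ) ↔ k = l := by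
    intro k l
    have := zigzag_lt k.isLt
    have := zigzag_lt l.isLt
    rw [ZMod.natCast_eq_natCast_iff_of_lt (by omega) (by omega), Fin.ext_iff]
    unfold zigzag; split_ifs <;> omega
  { toEquiv := Equiv.ofBijective _ (ZMod.bijective_of_injective_fin fun k l => (hcast k l).mp)
    map_rel_iff' {k l} := by
      have := zigzag_lt k.isLt
      have := zigzag_lt l.isLt
      show (reflectionGraph 0 (-1)).Adj ((zigzag n k : ℕ) : ZMod n) (zigzag n l : ℕ) ↔ _
      rw [reflectionGraph.adj_iff, ne_eq, hcast, ← Nat.cast_add,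
        ZMod.natCast_eq_neg_one_iff_of_lt (by omega), ← Nat.cast_zero,
        ZMod.natCast_eq_natCast_iff_of_lt (by omega) (by omega), pathGraph_adj, Fin.ext_iff]
      unfold zigzag; split_ifs <;> omega }

theorem isUnit_sub_of_iso_pathGraph {n : ℕ} {A C : ZMod n} (hA : A ≠ 1)
    (e : reflectionGraph A C ≃g pathGraph n) : IsUnit (A - C) := by
  have : NeZero n := ⟨(e 0).pos.ne'⟩
  by_contra hAC
  obtain ⟨p, hp, hpn, hp0⟩ := ZMod.exists_prime_castHom_eq_zero_of_not_isUnit hAC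
  have := Fact.mk hp
  set φ := ZMod.castHom hpn (ZMod p)
  have hφ : φ A = φ C := sub_eq_zero.mp (by rw [← map_sub]; exact hp0)
  have hconn := e.preconnected_iff.mpr (pathGraph_preconnected n)
  obtain ⟨hφA, h2⟩ := eq_one_and_two_eq_zero_of_forall_eq_or_add_eq (B := φ A) fun z w => by
    obtain ⟨x, rfl⟩ := ZMod.ringHom_surjective φ z
    obtain ⟨y, rfl⟩ := ZMod.ringHom_surjective φ w
    exact (map_eq_or_add_eq_of_reachable φ.toAddMonoidHom hφ (hconn x y)).imp Eq.symm id
  obtain rfl : p = 2 := (Nat.prime_dvd_prime_iff_eq hp Nat.prime_two).mp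
    ((ZMod.natCast_eq_zero_iff 2 p).mp (by exact_mod_cast h2))
  have hnot_double : ∀ B, φ B = 1 → ∀ x, x + x ≠ B := fun B hB x hx => by
    have := congrArg φ hx
    rw [map_add, hB, CharTwo.add_self_eq_zero] at this
    exact zero_ne_one this
  obtain rfl := eq_of_iso_pathGraph e (hnot_double A hφA) (hnot_double C (hφ ▸ hφA))
  obtain rfl : n = 2 := le_antisymm (le_two_of_iso_pathGraph e) (Nat.le_of_dvd (NeZero.pos n) hpn)
  exact hA (by simpa [Subsingleton.elim φ (RingHom.id _)] using hφA)

theorem nonempty_iso_pathGraph_iff {n : ℕ} [NeZero n] {A C : ZMod n} (hA : A ≠ 1) :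
    Nonempty (reflectionGraph A C ≃g pathGraph n) ↔ IsUnit (A - C) := by
  refine ⟨fun ⟨e⟩ => isUnit_sub_of_iso_pathGraph hA e, fun h => ?_⟩
  obtain ⟨s, hs | hs⟩ := ZMod.exists_add_self_eq_or_of_isUnit_sub h
  · exact ⟨((pathGraphIso n).trans (affineIso hs h)).symm⟩
  · rw [comm]
    have h' : IsUnit (C - A) := by rw [← neg_sub]; exact h.neg
    exact ⟨((pathGraphIso n).trans (affineIso hs h')).symm⟩

end reflectionGraph

theorem blockAdj_pair_iff {a b u v : ℕ} (hu : 0 < u) (hu' : u ≤ a + b) (hv : 0 < v)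
    (hv' : v ≤ a + b) :
    blockAdj [a, b] u v ↔ u ≠ v ∧ (u + v = a + 1 ∨ u + v = a + 1 + (a + b)) := by
  simp only [blockAdj, List.length_cons, List.length_nil, Nat.lt_succ_iff,
    Nat.le_one_iff_eq_zero_or_eq_one, or_and_right, exists_or, exists_eq_left, List.take_zero,
    List.take_succ_cons, List.take_nil, List.sum_cons, List.sum_nil]
  omega

noncomputable def meanderIso {a b c d n : ℕ} [NeZero n] (hab : a + b = n) (hcd : c + d = n) :
    meander [a, b] [c, d] n ≃g reflectionGraph ((a + 1 : ℕ) : ZMod n) ((c + 1 : ℕ) : ZMod n) :=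
  have hcast : ∀ i j : Fin n, (((i : ℕ) + 1 : ℕ) : ZMod n) = ((j : ℕ) + 1 : ℕ) ↔ i = j := by
    intro i j
    rw [ZMod.natCast_eq_natCast_iff_of_lt (by omega) (by omega), Fin.ext_iff]
    omega
  { toEquiv := Equiv.ofBijective _ (ZMod.bijective_of_injective_fin fun i j => (hcast i j).mp)
    map_rel_iff' {i j} := by
      show (reflectionGraph _ _).Adj (((i : ℕ) + 1 : ℕ) : ZMod n) (((j : ℕ) + 1 : ℕ) : ZMod n) ↔
        blockAdj [a, b] (i + 1) (j + 1) ∨ blockAdj [c, d] (i + 1) (j + 1)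
      rw [reflectionGraph.adj_iff, ne_eq, hcast, ← Nat.cast_add,
        ZMod.natCast_eq_natCast_iff_of_lt (by omega) (by omega),
        ZMod.natCast_eq_natCast_iff_of_lt (by omega) (by omega),
        blockAdj_pair_iff (by omega) (by omega) (by omega) (by omega),
        blockAdj_pair_iff (by omega) (by omega) (by omega) (by omega), Fin.ext_iff]
      omega }

theorem meander_opposite_maximal_parabolic_isSinglePath_iff_general
    (a b c d n : ℕ) (ha : 0 < a) (hb : 0 < b)
    (hab : a + b = n) (hcd : c + d = n) :
    IsSinglePath (meander [a, b] [c, d] n) ↔ Int.gcd ((a : ℤ) - (c : ℤ)) (n : ℤ) = 1 := by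
  have : NeZero n := ⟨by omega⟩
  have hA : ((a + 1 : ℕ) : ZMod n) ≠ 1 := by
    rw [Nat.cast_add_one, Ne, add_eq_right, ZMod.natCast_eq_zero_iff]
    exact Nat.not_dvd_of_pos_of_lt ha (by omega)
  have e := meanderIso hab hcd
  have he : IsSinglePath (meander [a, b] [c, d] n) ↔
      Nonempty (reflectionGraph ((a + 1 : ℕ) : ZMod n) ((c + 1 : ℕ) : ZMod n) ≃g pathGraph n) :=
    ⟨fun ⟨f⟩ => ⟨e.symm.trans f⟩, fun ⟨f⟩ => ⟨e.trans f⟩⟩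
  rw [he, reflectionGraph.nonempty_iso_pathGraph_iff hA, ← Int.isCoprime_iff_gcd_eq_one,
    isCoprime_comm, ← ZMod.coe_int_isUnit_iff_isCoprime]
  congr! 1
  push_cast
  ring

/-- For positive integers `a`, `b`, `c`, `d` with
`a + b = c + d = n`, the meander graph `M(a, b | c, d)` consists of a single
path if and only if `gcd(a - c, n) = 1`. -/
theorem meander_opposite_maximal_parabolic_isSinglePath_iff
    (a b c d n : ℕ) (ha : 0 < a) (hb : 0 < b) (hc : 0 < c) (hd : 0 < d)
    (hab : a + b = n) (hcd : c + d = n) :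
    IsSinglePath (meander [a, b] [c, d] n) ↔ Int.gcd ((a : ℤ) - (c : ℤ)) (n : ℤ) = 1 :=
  meander_opposite_maximal_parabolic_isSinglePath_iff_general a b c d n ha hb hab hcd
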